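/- Let Σ be a real symmetric positive definite 2n×2n matrix with Σ + (iħ/2)J_n positive semidefinite, ħ > 0. Then det Σ = (ħ/2)^{2n} if and only if there exists S ∈ Sp(n) such that Σ = (ħ/2)(Sᵀ S)⁻¹. (Equivalently: the Gaussian state with covariance matrix Σ is a pure state, i.e. its purity (ħ/2)ⁿ(det Σ)^{−1/2} equals 1, exactly when Σ = (ħ/2)(Sᵀ S)⁻¹ for some symplectic S.) -/

import Mathlib

open Matrix
open scoped ComplexOrder

noncomputable section

/-- The phase space index type for `ℝ^{2m}`, split as positions ⊕ momenta. -/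
abbrev PS (m : ℕ) := Fin m ⊕ Fin m

/-- The standard symplectic matrix `J_m = [[0, I_m], [-I_m, 0]]`. -/
def symplJ (m : ℕ) : Matrix (PS m) (PS m) ℝ := Matrix.fromBlocks 0 1 (-1) 0

/-- `S ∈ Sp(m)`: `Sᵀ J_m S = J_m`. -/
def IsSymplectic {m : ℕ} (S : Matrix (PS m) (PS m) ℝ) : Prop :=
  Sᵀ * symplJ m * S = symplJ m

/-- The quantum condition `Σ + (i·hbar/2) J_m ≥ 0`, i.e. the complex Hermitian matrix
`Σ + (i·hbar/2) J_m` is positive semidefinite. -/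
def QuantumCond (m : ℕ) (hbar : ℝ) (Sig : Matrix (PS m) (PS m) ℝ) : Prop :=
  (Sig.map Complex.ofReal + (hbar / 2 : ℝ) • Complex.I • (symplJ m).map Complex.ofReal).PosSemidef

/-- `μ ∈ ℂ` is an eigenvalue of the real matrix `N` (viewed as a complex matrix). -/
def IsEigenvalue {ι : Type} [Fintype ι] [DecidableEq ι] (N : Matrix ι ι ℝ) (μ : ℂ) : Prop :=
  (N.map Complex.ofReal - μ • 1).det = 0

/-! ### Auxiliary lemmas -/

lemma J_mul_J (m : ℕ) : symplJ m * symplJ m = -1 := by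
  simp [symplJ, Matrix.fromBlocks_multiply, ← Matrix.fromBlocks_one, Matrix.fromBlocks_neg]

lemma J_transpose (m : ℕ) : (symplJ m)ᵀ = -symplJ m := by
  simp [symplJ, Matrix.fromBlocks_transpose, Matrix.fromBlocks_neg]

lemma card_PS (m : ℕ) : Fintype.card (PS m) = 2 * m := by
  simp [Fintype.card_sum]; ring

lemma J_det_sq (m : ℕ) : (symplJ m).det * (symplJ m).det = 1 := by
  rw [← Matrix.det_mul, J_mul_J]
  rw [show (-1 : Matrix (PS m) (PS m) ℝ) = (-1 : ℝ) • 1 by simp]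
  rw [Matrix.det_smul, Matrix.det_one, card_PS, mul_one, pow_mul]
  norm_num

lemma J_det_isUnit (m : ℕ) : IsUnit (symplJ m).det :=
  IsUnit.of_mul_eq_one _ (J_det_sq m)

lemma map_mul' {ι : Type} [Fintype ι] (A B : Matrix ι ι ℝ) :
    (A * B).map Complex.ofReal = A.map Complex.ofReal * B.map Complex.ofReal := by
  exact Matrix.map_mul (f := Complex.ofRealHom)

lemma map_one' {ι : Type} [Fintype ι] [DecidableEq ι] :
    ((1 : Matrix ι ι ℝ)).map Complex.ofReal = 1 :=
  Matrix.map_one _ Complex.ofReal_zero Complex.ofReal_one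

lemma map_inj {ι : Type} [Fintype ι] (A B : Matrix ι ι ℝ)
    (h : A.map Complex.ofReal = B.map Complex.ofReal) : A = B := by
  ext i j
  exact Complex.ofReal_injective (by simpa [Matrix.map_apply] using congrFun (congrFun h i) j)

lemma map_neg_one {ι : Type} [Fintype ι] [DecidableEq ι] :
    ((-1 : Matrix ι ι ℝ)).map Complex.ofReal = (-1 : Matrix ι ι ℂ) := by
  ext i j
  by_cases h : i = j <;> simp [Matrix.map_apply, Matrix.neg_apply, Matrix.one_apply, h]

lemma eig_norm_one {ι : Type} [Fintype ι] [DecidableEq ι] {K : Matrix ι ι ℂ}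
    (hKH : K.IsHermitian) (i : ι) :
    dotProduct (star (⇑(hKH.eigenvectorBasis i) : ι → ℂ)) (⇑(hKH.eigenvectorBasis i)) = 1 := by
  have hn : ‖hKH.eigenvectorBasis i‖ = 1 := hKH.eigenvectorBasis.orthonormal.1 i
  have h2 := inner_self_eq_norm_sq_to_K (𝕜 := ℂ) (hKH.eigenvectorBasis i)
  rw [EuclideanSpace.inner_eq_star_dotProduct, hn] at h2
  rw [dotProduct_comm]
  simpa [WithLp.equiv] using h2

lemma eig_bound {ι : Type} [Fintype ι] [DecidableEq ι] {K : Matrix ι ι ℂ}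
    (hKH : K.IsHermitian) (h1 : (1 + K).PosSemidef) (h2 : (1 - K).PosSemidef) (i : ι) :
    (hKH.eigenvalues i) ^ 2 ≤ 1 := by
  set v : ι → ℂ := ⇑(hKH.eigenvectorBasis i) with hv
  have hKv : K *ᵥ v = hKH.eigenvalues i • v := hKH.mulVec_eigenvectorBasis i
  have hvv : dotProduct (star v) v = 1 := eig_norm_one hKH i
  have ha : (0:ℂ) ≤ 1 + (hKH.eigenvalues i : ℂ) := by
    have := h1.dotProduct_mulVec_nonneg v
    rw [Matrix.add_mulVec, Matrix.one_mulVec, hKv, dotProduct_add,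
      dotProduct_smul, hvv] at this
    simpa [Complex.real_smul] using this
  have hb : (0:ℂ) ≤ 1 - (hKH.eigenvalues i : ℂ) := by
    have := h2.dotProduct_mulVec_nonneg v
    rw [Matrix.sub_mulVec, Matrix.one_mulVec, hKv, dotProduct_sub,
      dotProduct_smul, hvv] at this
    simpa [Complex.real_smul] using this
  have ha' : (0:ℝ) ≤ 1 + hKH.eigenvalues i := by
    have : ((0:ℝ):ℂ) ≤ ((1 + hKH.eigenvalues i : ℝ) : ℂ) := by push_cast; simpa using ha
    exact_mod_cast this
  have hb' : (0:ℝ) ≤ 1 - hKH.eigenvalues i := by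
    have : ((0:ℝ):ℂ) ≤ ((1 - hKH.eigenvalues i : ℝ) : ℂ) := by push_cast; simpa using hb
    exact_mod_cast this
  nlinarith [ha', hb']

lemma herm_sq_eq_one {ι : Type} [Fintype ι] [DecidableEq ι] {K : Matrix ι ι ℂ}
    (hKH : K.IsHermitian) (hb : ∀ i, (hKH.eigenvalues i) ^ 2 ≤ 1)
    (hdet : K.det * K.det = 1) : K * K = 1 := by
  have hprod : ∏ i, (hKH.eigenvalues i) ^ 2 = 1 := by
    have h := hKH.det_eq_prod_eigenvalues
    have hC : ((∏ i, (hKH.eigenvalues i) ^ 2 : ℝ) : ℂ) = 1 := by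
      push_cast
      rw [Finset.prod_pow]
      rw [show (∏ i, (hKH.eigenvalues i : ℂ)) = K.det from h.symm]
      rw [sq]; exact hdet
    exact_mod_cast hC
  have hsq1 : ∀ j, (hKH.eigenvalues j) ^ 2 = 1 := by
    intro j
    refine le_antisymm (hb j) ?_
    have herase : ∏ i ∈ Finset.univ.erase j, (hKH.eigenvalues i) ^ 2 ≤ 1 :=
      Finset.prod_le_one (fun i _ => sq_nonneg _) (fun i _ => hb i)
    have hsplit : (hKH.eigenvalues j) ^ 2 * ∏ i ∈ Finset.univ.erase j, (hKH.eigenvalues i) ^ 2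
        = 1 := (Finset.mul_prod_erase Finset.univ
          (fun i => (hKH.eigenvalues i) ^ 2) (Finset.mem_univ j)).trans hprod
    nlinarith [sq_nonneg (hKH.eigenvalues j), herase, hsplit]
  have hDD : diagonal (RCLike.ofReal ∘ hKH.eigenvalues) *
      diagonal (RCLike.ofReal ∘ hKH.eigenvalues) = (1 : Matrix ι ι ℂ) := by
    rw [Matrix.diagonal_mul_diagonal]
    have hfun : (fun i => (RCLike.ofReal ∘ hKH.eigenvalues) i * (RCLike.ofReal ∘ hKH.eigenvalues) i)
        = fun _ : ι => (1 : ℂ) := by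
      funext i
      simp only [Function.comp_apply]
      rw [← RCLike.ofReal_mul, ← sq, hsq1 i, RCLike.ofReal_one]
    rw [hfun, Matrix.diagonal_one]
  set U := (hKH.eigenvectorUnitary : Matrix ι ι ℂ) with hUdef
  have hU1 : U * star U = 1 := hKH.eigenvectorUnitary.2.2
  have hU2 : star U * U = 1 := Matrix.UnitaryGroup.star_mul_self hKH.eigenvectorUnitary
  set D : Matrix ι ι ℂ := diagonal (RCLike.ofReal ∘ hKH.eigenvalues) with hDdef
  calc K * K = (U * D * star U) * (U * D * star U) := by rw [hKH.spectral_theorem, Unitary.conjStarAlgAut_apply]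
    _ = U * (D * ((star U * U) * (D * star U))) := by simp only [Matrix.mul_assoc]
    _ = U * (D * (D * star U)) := by rw [hU2, Matrix.one_mul]
    _ = U * ((D * D) * star U) := by simp only [Matrix.mul_assoc]
    _ = U * star U := by rw [hDD, Matrix.one_mul]
    _ = 1 := hU1

namespace Matrix.PosSemidef
open scoped MatrixOrder
variable {ι : Type} [Fintype ι] [DecidableEq ι]

def sqrt {A : Matrix ι ι ℝ} (_hA : A.PosSemidef) : Matrix ι ι ℝ := CFC.sqrt A

lemma sqrt_mul_self {A : Matrix ι ι ℝ} (hA : A.PosSemidef) : hA.sqrt * hA.sqrt = A :=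
  CFC.sqrt_mul_sqrt_self A hA.nonneg

lemma posSemidef_sqrt {A : Matrix ι ι ℝ} (hA : A.PosSemidef) : hA.sqrt.PosSemidef :=
  (CFC.sqrt_nonneg A).posSemidef

lemma eq_of_sq_eq_sq {A B : Matrix ι ι ℝ} (hA : A.PosSemidef) (hB : B.PosSemidef)
    (h : A ^ 2 = B ^ 2) : A = B :=
  (CFC.sq_eq_sq_iff A B hA.nonneg hB.nonneg).mp h

end Matrix.PosSemidef

/-- a quantum covariance matrix `Σ` satisfies `det Σ = (hbar/2)^{2n}`
(i.e. the Gaussian state with covariance matrix `Σ` is pure, its purity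
`(hbar/2)ⁿ (det Σ)^{-1/2}` being `1`) if and only if `Σ = (hbar/2)(SᵀS)⁻¹`
for some `S ∈ Sp(n)`. -/
theorem statement8 (n : ℕ) (hbar : ℝ) (hhb : 0 < hbar)
    (Sig : Matrix (PS n) (PS n) ℝ) (hsym : Sig.IsSymm) (hpos : Sig.PosDef)
    (hq : QuantumCond n hbar Sig) :
    Sig.det = (hbar / 2) ^ (2 * n) ↔
      ∃ S : Matrix (PS n) (PS n) ℝ, IsSymplectic S ∧ Sig = (hbar / 2) • (Sᵀ * S)⁻¹ := by
  set c : ℝ := hbar / 2 with hc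
  have hc0 : 0 < c := by positivity
  set J : Matrix (PS n) (PS n) ℝ := symplJ n with hJdef
  have hJJ : J * J = -1 := J_mul_J n
  have hJT : Jᵀ = -J := J_transpose n
  have hJdet : IsUnit J.det := J_det_isUnit n
  constructor
  · -- forward direction
    intro hdet
    -- R : square root of Sig
    have hpsd := hpos.posSemidef
    set R : Matrix (PS n) (PS n) ℝ := hpsd.sqrt with hRdef
    have hRsq : R * R = Sig := hpsd.sqrt_mul_self
    have hRH : R.IsHermitian := hpsd.posSemidef_sqrt.1
    have hRT : Rᵀ = R := by
      rw [← Matrix.conjTranspose_eq_transpose_of_trivial]; exact hRH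
    have hSigdet : Sig.det ≠ 0 := hpos.det_pos.ne'
    have hRdet : IsUnit R.det := by
      rw [isUnit_iff_ne_zero]
      intro h0
      apply hSigdet
      rw [← hRsq, Matrix.det_mul, h0, zero_mul]
    have hRiT : (R⁻¹)ᵀ = R⁻¹ := by rw [Matrix.transpose_nonsing_inv, hRT]
    set M : Matrix (PS n) (PS n) ℝ := R⁻¹ * J * R⁻¹ with hMdef
    have hMT : Mᵀ = -M := by
      rw [hMdef, Matrix.transpose_mul, Matrix.transpose_mul, hRiT, hJT]
      noncomm_ring
    set Mc : Matrix (PS n) (PS n) ℂ := M.map Complex.ofReal with hMcdef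
    set K : Matrix (PS n) (PS n) ℂ := ((c : ℂ) * Complex.I) • Mc with hKdef
    -- congruence of the quantum condition by (R⁻¹).map
    set B : Matrix (PS n) (PS n) ℂ := (R⁻¹).map Complex.ofReal with hBdef
    have hBH : Bᴴ = B := by
      ext i j
      simp only [hBdef, Matrix.conjTranspose_apply, Matrix.map_apply]
      rw [Complex.star_def, Complex.conj_ofReal]
      exact congrArg Complex.ofReal (congrFun (congrFun hRiT i) j)
    have hRinvSig : R⁻¹ * Sig * R⁻¹ = 1 := by
      rw [← hRsq, ← mul_assoc, Matrix.nonsing_inv_mul _ hRdet, one_mul,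
        Matrix.mul_nonsing_inv _ hRdet]
    have hcong : (B * (Sig.map Complex.ofReal + (c : ℝ) • Complex.I • J.map Complex.ofReal) * Bᴴ)
        = 1 + K := by
      rw [hBH, Matrix.mul_add, Matrix.add_mul]
      congr 1
      · rw [hBdef, ← map_mul', ← map_mul', hRinvSig, map_one']
      · rw [Matrix.mul_smul, Matrix.smul_mul, Matrix.mul_smul, Matrix.smul_mul]
        rw [hBdef, ← map_mul', ← map_mul']
        rw [show R⁻¹ * J * R⁻¹ = M from rfl, ← hMcdef, hKdef]
        ext i j
        simp only [Matrix.smul_apply, Complex.real_smul, smul_eq_mul]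
        ring
    have hP1 : (1 + K).PosSemidef := by
      rw [← hcong]
      exact hq.mul_mul_conjTranspose_same B
    have hKT : Kᵀ = -K := by
      rw [hKdef, Matrix.transpose_smul, hMcdef, ← Matrix.transpose_map, hMT]
      ext i j
      simp [Matrix.smul_apply, Matrix.map_apply]
    have hP2 : (1 - K).PosSemidef := by
      have := hP1.transpose
      rwa [Matrix.transpose_add, Matrix.transpose_one, hKT, ← sub_eq_add_neg] at this
    have hKH : K.IsHermitian := by
      have h1 := hP1.1
      rw [Matrix.IsHermitian, Matrix.conjTranspose_add, Matrix.conjTranspose_one] at h1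
      exact add_left_cancel h1
    -- determinant of K
    have hdetR2 : R.det * R.det = Sig.det := by rw [← Matrix.det_mul, hRsq]
    have hdetM2 : M.det * M.det = (Sig.det)⁻¹ * (Sig.det)⁻¹ := by
      have hdM : M.det = R⁻¹.det * J.det * R⁻¹.det := by
        rw [hMdef, Matrix.det_mul, Matrix.det_mul]
      have hdRi : R⁻¹.det = (R.det)⁻¹ := by
        rw [Matrix.det_nonsing_inv, Ring.inverse_eq_inv]
      rw [hdM, hdRi]
      have hRd0 : R.det ≠ 0 := by
        intro h0; apply hSigdet; rw [← hdetR2, h0, zero_mul]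
      field_simp
      nlinarith [J_det_sq n, hdetR2]
    have hMcdet : Mc.det = (M.det : ℂ) := by
      rw [hMcdef, show M.map Complex.ofReal = Complex.ofRealHom.mapMatrix M from rfl]
      exact (RingHom.map_det Complex.ofRealHom M).symm
    have hcC : (c:ℂ) ≠ 0 := Complex.ofReal_ne_zero.mpr hc0.ne'
    have hdetK : K.det * K.det = 1 := by
      have h1 : K.det = ((c : ℂ) * Complex.I) ^ (2 * n) * (M.det : ℂ) := by
        rw [hKdef, Matrix.det_smul, card_PS, hMcdet]
      have hsq : ((c:ℂ) * Complex.I) * ((c:ℂ) * Complex.I) = -((c:ℂ)^2) := by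
        rw [mul_mul_mul_comm, ← sq, ← sq, Complex.I_sq]; ring
      have h3 : ((c:ℂ) * Complex.I) ^ (2*n) * ((c:ℂ) * Complex.I) ^ (2*n)
          = ((c:ℂ)^2) ^ (2*n) := by
        rw [← mul_pow, hsq, (even_two_mul n).neg_pow]
      have h4 : (M.det : ℂ) * (M.det : ℂ) = (((Sig.det)⁻¹ * (Sig.det)⁻¹ : ℝ) : ℂ) := by
        rw [← Complex.ofReal_mul, hdetM2]
      calc K.det * K.det
          = (((c:ℂ) * Complex.I) ^ (2*n) * ((c:ℂ) * Complex.I) ^ (2*n))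
            * ((M.det:ℂ) * (M.det:ℂ)) := by rw [h1]; ring
        _ = ((c:ℂ)^2) ^ (2*n) * (((Sig.det)⁻¹ * (Sig.det)⁻¹ : ℝ) : ℂ) := by rw [h3, h4]
        _ = 1 := by
            rw [hdet]
            push_cast
            field_simp
            ring
    -- K * K = 1
    have hK2 : K * K = 1 :=
      herm_sq_eq_one hKH (fun i => eig_bound hKH hP1 hP2 i) hdetK
    -- translate back to the real matrices
    have hsmK : K * K = (-((c:ℂ)^2)) • (Mc * Mc) := by
      rw [hKdef, Matrix.smul_mul, Matrix.mul_smul, smul_smul]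
      congr 1
      rw [mul_mul_mul_comm, ← sq, ← sq, Complex.I_sq]; ring
    have hMcMc : ((c:ℂ)^2) • (Mc * Mc) = -1 := by
      have : -(((c:ℂ)^2) • (Mc * Mc)) = 1 := by rw [← neg_smul, ← hsmK, hK2]
      rw [← this, neg_neg]
    have hmap2 : ((c^2 : ℝ) • (M * M)).map Complex.ofReal = ((c:ℂ)^2) • (Mc * Mc) := by
      rw [hMcdef, ← map_mul']
      ext i j
      simp only [Matrix.map_apply, Matrix.smul_apply, smul_eq_mul]
      push_cast
      ring
    have hMM : (c^2 : ℝ) • (M * M) = (-1 : Matrix (PS n) (PS n) ℝ) := by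
      apply map_inj
      rw [hmap2, hMcMc, map_neg_one]
    -- key identity : c² J Σ⁻¹ J = -Σ
    have hSiginv : R⁻¹ * R⁻¹ = Sig⁻¹ := by rw [← hRsq, Matrix.mul_inv_rev]
    have hR1 : R * (M * M) * R = J * Sig⁻¹ * J := by
      rw [hMdef, ← hSiginv]
      have e1 : R * (R⁻¹ * J * R⁻¹ * (R⁻¹ * J * R⁻¹)) * R
          = (R * R⁻¹) * (J * ((R⁻¹ * R⁻¹) * (J * (R⁻¹ * R)))) := by noncomm_ring
      rw [e1, Matrix.mul_nonsing_inv _ hRdet, Matrix.nonsing_inv_mul _ hRdet, mul_one, one_mul]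
      noncomm_ring
    have hkey : (c^2 : ℝ) • (J * Sig⁻¹ * J) = -Sig := by
      have h := congrArg (fun X => R * X * R) hMM
      rw [Matrix.mul_smul, Matrix.smul_mul, hR1] at h
      rw [h]
      have : R * (-1 : Matrix (PS n) (PS n) ℝ) * R = -(R * R) := by noncomm_ring
      rw [this, hRsq]
    have hSigdetU : IsUnit Sig.det := isUnit_iff_ne_zero.mpr hSigdet
    have hSJS : Sig * J * Sig = (c^2 : ℝ) • J := by
      have h := congrArg (fun X => Sig * (J * X)) hkey
      rw [Matrix.mul_smul, Matrix.mul_smul] at h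
      have i1 : J * (J * Sig⁻¹ * J) = (J * J) * (Sig⁻¹ * J) := by noncomm_ring
      have e2 : Sig * (J * (J * Sig⁻¹ * J)) = -J := by
        rw [i1, hJJ]
        have i2 : Sig * ((-1 : Matrix (PS n) (PS n) ℝ) * (Sig⁻¹ * J))
            = -((Sig * Sig⁻¹) * J) := by noncomm_ring
        rw [i2, Matrix.mul_nonsing_inv _ hSigdetU, one_mul]
      rw [e2] at h
      have e4 : Sig * (J * -Sig) = -(Sig * J * Sig) := by noncomm_ring
      rw [e4, smul_neg] at h
      exact (neg_inj.mp h).symm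
    -- the symplectic positive definite matrix Q
    set Q : Matrix (PS n) (PS n) ℝ := c⁻¹ • Sig with hQdef
    have hQJQ : Q * J * Q = J := by
      have e0 : Q * J * Q = (c⁻¹ * c⁻¹) • (Sig * J * Sig) := by
        rw [hQdef, Matrix.smul_mul, Matrix.smul_mul, Matrix.mul_smul, smul_smul]
      rw [e0, hSJS, smul_smul, show c⁻¹ * c⁻¹ * c ^ 2 = 1 by field_simp, one_smul]
    have hQpsd : Q.PosSemidef := by
      refine Matrix.PosSemidef.of_dotProduct_mulVec_nonneg ?_ ?_
      · show Qᴴ = Q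
        rw [Matrix.conjTranspose_eq_transpose_of_trivial, hQdef, Matrix.transpose_smul, hsym.eq]
      · intro x
        rw [hQdef, Matrix.smul_mulVec, dotProduct_smul, smul_eq_mul]
        exact mul_nonneg (inv_nonneg.mpr hc0.le) (hpsd.dotProduct_mulVec_nonneg x)
    have hQdetU : IsUnit Q.det := by
      rw [hQdef, Matrix.det_smul]
      exact isUnit_iff_ne_zero.mpr
        (mul_ne_zero (pow_ne_zero _ (inv_ne_zero hc0.ne')) hSigdet)
    set T : Matrix (PS n) (PS n) ℝ := hQpsd.sqrt with hTdef
    have hTT : T * T = Q := hQpsd.sqrt_mul_self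
    have hTpsd : T.PosSemidef := hQpsd.posSemidef_sqrt
    have hTt : Tᵀ = T := by
      rw [← Matrix.conjTranspose_eq_transpose_of_trivial]; exact hTpsd.1
    have hTdetU : IsUnit T.det := by
      refine isUnit_iff_ne_zero.mpr (fun h0 => hQdetU.ne_zero ?_)
      rw [← hTT, Matrix.det_mul, h0, zero_mul]
    have hJH : Jᴴ = -J := by rw [Matrix.conjTranspose_eq_transpose_of_trivial, hJT]
    have hJJt : J * (-J) = 1 := by rw [mul_neg, hJJ, neg_neg]
    have hWpsd : ((-J) * T * J).PosSemidef := by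
      have := hTpsd.conjTranspose_mul_mul_same J
      rwa [hJH] at this
    have hQinv : Q⁻¹ = (-J) * Q * J := by
      apply Matrix.inv_eq_right_inv
      have e7 : Q * ((-J) * Q * J) = -(Q * J * Q * J) := by noncomm_ring
      rw [e7]
      have e8 : Q * J * Q * J = J * J := by rw [hQJQ]
      rw [e8, hJJ, neg_neg]
    have hW2 : ((-J) * T * J) * ((-J) * T * J) = Q⁻¹ := by
      have e5 : ((-J) * T * J) * ((-J) * T * J) = (-J) * ((T * (J * (-J))) * T) * J := by
        noncomm_ring
      rw [e5, hJJt, mul_one]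
      have e6 : (-J) * (T * T) * J = Q⁻¹ := by rw [hTT, hQinv]
      rw [← e6]
    have hTinvpsd : (T⁻¹).PosSemidef := hTpsd.inv
    have hTinv2 : T⁻¹ * T⁻¹ = Q⁻¹ := by rw [← Matrix.mul_inv_rev, hTT]
    have hWT : (-J) * T * J = T⁻¹ :=
      hWpsd.eq_of_sq_eq_sq hTinvpsd (by rw [pow_two, pow_two, hW2, hTinv2])
    have hTJTJ : T * J * T * J = -1 := by
      have h9 : T * ((-J) * T * J) = 1 := by rw [hWT, Matrix.mul_nonsing_inv _ hTdetU]
      have e9 : T * ((-J) * T * J) = -(T * J * T * J) := by noncomm_ring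
      rw [e9, neg_eq_iff_eq_neg] at h9
      exact h9
    have hTJT : T * J * T = J := by
      have h10 : T * J * T * (J * J) = (T * J * T * J) * J := by noncomm_ring
      rw [hJJ, hTJTJ] at h10
      rw [mul_neg_one, neg_one_mul] at h10
      exact neg_inj.mp h10
    have hTit : (T⁻¹)ᵀ = T⁻¹ := by rw [Matrix.transpose_nonsing_inv, hTt]
    refine ⟨T⁻¹, ?_, ?_⟩
    · show (T⁻¹)ᵀ * J * T⁻¹ = J
      rw [hTit]
      calc T⁻¹ * J * T⁻¹ = T⁻¹ * (T * J * T) * T⁻¹ := by rw [hTJT]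
        _ = (T⁻¹ * T) * J * (T * T⁻¹) := by noncomm_ring
        _ = J := by
            rw [Matrix.nonsing_inv_mul _ hTdetU, Matrix.mul_nonsing_inv _ hTdetU, one_mul, mul_one]
    · show Sig = c • ((T⁻¹)ᵀ * T⁻¹)⁻¹
      rw [hTit, hTinv2, Matrix.nonsing_inv_nonsing_inv _ hQdetU, hQdef, smul_smul,
        mul_inv_cancel₀ hc0.ne', one_smul]
  · rintro ⟨S, hS, rfl⟩
    have hdetS : S.det * S.det = 1 := by
      have h1 := congrArg Matrix.det hS
      rw [Matrix.det_mul, Matrix.det_mul, Matrix.det_transpose] at h1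
      have hJ0 : J.det ≠ 0 := hJdet.ne_zero
      exact mul_right_cancel₀ hJ0 (by linear_combination h1)
    have h2 : (Sᵀ * S).det = 1 := by rw [Matrix.det_mul, Matrix.det_transpose, hdetS]
    rw [Matrix.det_smul, Matrix.det_nonsing_inv, h2, card_PS]
    simp
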